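/- arXiv:2510.07120 — 2 statements merged into one kernel-verified Lean document; each statement's English description precedes it below -/
import Mathlib

section
/- For m > 0, ms > 1, the function f(x) = (2(mΩs)^m (ms Ωm)^{ms} x^{2m-1}) / (B(m,ms) (mΩs x² + ms Ωm)^{m+ms}) with Ωs² = ms/(ms−1) and Ωm = Ω/Ωs satisfies ∫₀^∞ x² f(x) dx = ms Ωm / ((ms−1) Ωs) = Ω. That is, the mean power of the modified Fisher–Snedecor F envelope equals Ω. -/
open MeasureTheory Real Set

noncomputable def Beta (a b : ℝ) : ℝ :=
  Real.Gamma a * Real.Gamma b / Real.Gamma (a + b)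

noncomputable def fEnv (m ms Ωs Ωm x : ℝ) : ℝ :=
  (2 * (m * Ωs) ^ m * (ms * Ωm) ^ ms * x ^ (2 * m - 1)) /
    (Beta m ms * (m * Ωs * x ^ 2 + ms * Ωm) ^ (m + ms))

lemma betaIntegral_eq_real (a b : ℝ) :
    Complex.betaIntegral a b = ((∫ x in (0:ℝ)..1, x ^ (a-1) * (1-x) ^ (b-1) : ℝ) : ℂ) := by
  rw [Complex.betaIntegral, ← intervalIntegral.integral_ofReal]
  refine intervalIntegral.integral_congr fun x hx => ?_
  rw [uIcc_of_le zero_le_one] at hx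
  push_cast
  rw [Complex.ofReal_cpow hx.1, Complex.ofReal_cpow (by linarith [hx.2] : (0:ℝ) ≤ 1 - x)]
  push_cast
  ring

lemma beta_eq_integral (a b : ℝ) (ha : 0 < a) (hb : 0 < b) :
    ∫ x in (0:ℝ)..1, x ^ (a-1) * (1-x) ^ (b-1) = Beta a b := by
  have h := Complex.Gamma_mul_Gamma_eq_betaIntegral (s := a) (t := b)
    (by simpa using ha) (by simpa using hb)
  rw [betaIntegral_eq_real a b, ← Complex.ofReal_add, Complex.Gamma_ofReal,
    Complex.Gamma_ofReal, Complex.Gamma_ofReal, ← Complex.ofReal_mul, ← Complex.ofReal_mul] at h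
  have h2 : Real.Gamma a * Real.Gamma b
      = Real.Gamma (a+b) * ∫ x in (0:ℝ)..1, x ^ (a-1) * (1-x) ^ (b-1) := by
    exact_mod_cast h
  have hG : Real.Gamma (a+b) ≠ 0 := (Real.Gamma_pos_of_pos (by linarith)).ne'
  rw [Beta]
  field_simp
  linarith [h2]

lemma image_div_one_sub : (fun u : ℝ => u / (1 - u)) '' Ioo 0 1 = Ioi 0 := by
  ext t
  constructor
  · rintro ⟨u, ⟨hu0, hu1⟩, rfl⟩
    exact div_pos hu0 (by linarith)
  · intro ht
    refine ⟨t / (1 + t), ⟨div_pos ht (by linarith [mem_Ioi.mp ht]), ?_⟩, ?_⟩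
    · rw [div_lt_one (by linarith [mem_Ioi.mp ht])]; linarith [mem_Ioi.mp ht]
    · have h1 : (0:ℝ) < 1 + t := by linarith [mem_Ioi.mp ht]
      field_simp
      ring

lemma beta_Ioi (a b : ℝ) (ha : 0 < a) (hb : 0 < b) :
    ∫ t in Ioi (0:ℝ), t ^ (a-1) * (1+t) ^ (-(a+b)) = Beta a b := by
  have hderiv : ∀ u ∈ Ioo (0:ℝ) 1,
      HasDerivWithinAt (fun u : ℝ => u / (1 - u)) ((1-u)⁻¹^2) (Ioo 0 1) u := by
    intro u hu
    have h1 : (1:ℝ) - u ≠ 0 := by cases hu; intro h; linarith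
    have := (hasDerivAt_id u).div ((hasDerivAt_id u).const_sub 1) h1
    refine this.hasDerivWithinAt.congr_deriv ?_
    simp only [id]
    field_simp
    ring
  have hinj : InjOn (fun u : ℝ => u / (1 - u)) (Ioo 0 1) := by
    intro u hu v hv h
    have h1 : (1:ℝ) - u ≠ 0 := by cases hu; intro hh; linarith
    have h2 : (1:ℝ) - v ≠ 0 := by cases hv; intro hh; linarith
    field_simp at h
    linarith
  have key := integral_image_eq_integral_abs_deriv_smul measurableSet_Ioo hderiv hinj
    (fun t => t ^ (a-1) * (1+t) ^ (-(a+b)))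
  rw [image_div_one_sub] at key
  rw [key]
  rw [← beta_eq_integral a b ha hb,
    intervalIntegral.integral_of_le zero_le_one, integral_Ioc_eq_integral_Ioo]
  refine setIntegral_congr_fun measurableSet_Ioo fun u hu => ?_
  obtain ⟨hu0, hu1⟩ := hu
  have h1 : (0:ℝ) < 1 - u := by linarith
  have h2 : 0 < u / (1 - u) := div_pos hu0 h1
  have h3 : (1 + u / (1 - u)) = (1-u)⁻¹ := by field_simp; ring
  rw [smul_eq_mul, h3, abs_of_pos (by positivity), div_rpow hu0.le h1.le]
  have e1 : (1-u)⁻¹ = rexp (-(Real.log (1-u))) := by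
    rw [Real.exp_neg, Real.exp_log h1]
  rw [e1]
  simp only [Real.rpow_def_of_pos h1, Real.rpow_def_of_pos hu0, ← Real.exp_neg,
    ← Real.exp_nat_mul, Real.log_exp, ← Real.exp_add, ← Real.exp_sub,
    Real.rpow_def_of_pos (Real.exp_pos _)]
  rw [Real.exp_eq_exp]
  push_cast
  ring

lemma Beta_pos {a b : ℝ} (ha : 0 < a) (hb : 0 < b) : 0 < Beta a b := by
  have := Real.Gamma_pos_of_pos ha
  have := Real.Gamma_pos_of_pos hb
  have := Real.Gamma_pos_of_pos (add_pos ha hb)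
  rw [Beta]; positivity

lemma Beta_ratio {m ms : ℝ} (hm : 0 < m) (hms : 1 < ms) :
    Beta (m+1) (ms-1) = (m / (ms-1)) * Beta m ms := by
  have h1 : Real.Gamma (m + 1) = m * Real.Gamma m := Real.Gamma_add_one hm.ne'
  have h2 : Real.Gamma ms = (ms - 1) * Real.Gamma (ms - 1) := by
    have := Real.Gamma_add_one (s := ms - 1) (ne_of_gt (by linarith : (0:ℝ) < ms - 1))
    rw [show ms - 1 + 1 = ms by ring] at this
    exact this
  have h3 : m + 1 + (ms - 1) = m + ms := by ring
  have hms1 : (ms:ℝ) - 1 ≠ 0 := by intro h; linarith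
  have hG : Real.Gamma (m + ms) ≠ 0 := (Real.Gamma_pos_of_pos (by linarith)).ne'
  rw [Beta, Beta, h3, h1, h2]
  field_simp

/-- mean power of the modified Fisher–Snedecor F envelope equals Ω. -/
theorem stmt1 (m ms Ωs Ωm Ω : ℝ) (hm : 0 < m) (hms : 1 < ms) (hΩ : 0 < Ω)
    (hΩs : Ωs ^ 2 = ms / (ms - 1)) (hΩspos : 0 < Ωs) (hΩm : Ωm = Ω / Ωs) :
    (∫ x in Ioi (0 : ℝ), x ^ 2 * fEnv m ms Ωs Ωm x) = ms * Ωm / ((ms - 1) * Ωs) ∧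
      ms * Ωm / ((ms - 1) * Ωs) = Ω := by
  have hΩmpos : 0 < Ωm := by rw [hΩm]; positivity
  have hA : 0 < m * Ωs := by positivity
  have hB : 0 < ms * Ωm := by positivity
  have hBeta : 0 < Beta m ms := Beta_pos hm (by linarith)
  set c : ℝ := (m * Ωs) / (ms * Ωm) with hc
  set D : ℝ := (ms * Ωm) / ((m * Ωs) * Beta m ms) with hD
  have hcpos : 0 < c := by positivity
  have hDpos : 0 < D := by positivity
  constructor
  · -- integral equals ms Ωm / ((ms-1) Ωs)
    have hderiv : ∀ x ∈ Ioi (0:ℝ),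
        HasDerivWithinAt (fun x : ℝ => c * x ^ 2) (2 * c * x) (Ioi 0) x := by
      intro x hx
      have := ((hasDerivAt_pow 2 x).const_mul c).hasDerivWithinAt (s := Ioi 0)
      refine this.congr_deriv ?_
      push_cast
      ring
    have hinj : InjOn (fun x : ℝ => c * x ^ 2) (Ioi 0) := by
      intro u hu v hv h
      simp only [mem_Ioi] at hu hv
      simp only at h
      have h2 : u ^ 2 = v ^ 2 := by
        have := mul_left_cancel₀ hcpos.ne' h
        exact this
      nlinarith
    have himg : (fun x : ℝ => c * x ^ 2) '' Ioi 0 = Ioi 0 := by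
      ext t
      constructor
      · rintro ⟨x, hx, rfl⟩
        simp only [mem_Ioi] at hx ⊢
        positivity
      · intro ht
        simp only [mem_Ioi] at ht
        refine ⟨Real.sqrt (t / c), ?_, ?_⟩
        · simp only [mem_Ioi]; positivity
        · simp only [Real.sq_sqrt (by positivity : (0:ℝ) ≤ t / c)]
          field_simp
    have key := integral_image_eq_integral_abs_deriv_smul measurableSet_Ioi hderiv hinj
      (fun t => D * (t ^ m * (1+t) ^ (-(m+ms))))
    rw [himg] at key
    have hpt : ∀ x ∈ Ioi (0:ℝ), |2 * c * x| • (D * ((c * x ^ 2) ^ m * (1 + c * x ^ 2) ^ (-(m+ms))))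
        = x ^ 2 * fEnv m ms Ωs Ωm x := by
      intro x hx
      simp only [mem_Ioi] at hx
      have hS : 0 < m * Ωs * x ^ 2 + ms * Ωm := by positivity
      have h4 : 1 + c * x ^ 2 = (m * Ωs * x ^ 2 + ms * Ωm) / (ms * Ωm) := by
        rw [hc]; field_simp; ring
      have e2 : ((x ^ 2 : ℝ)) ^ m = x ^ (2 * m) := by
        rw [← Real.rpow_natCast x 2, ← Real.rpow_mul hx.le]
        norm_num
      have e1 : x ^ (2 * m - 1) = x ^ (2 * m) / x := by
        rw [Real.rpow_sub hx, Real.rpow_one]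
      rw [smul_eq_mul, abs_of_pos (by positivity), h4, fEnv,
        Real.mul_rpow hcpos.le (by positivity), e2, e1,
        Real.div_rpow hS.le hB.le, hc,
        Real.div_rpow hA.le hB.le,
        Real.rpow_neg (by positivity), Real.rpow_neg hB.le,
        Real.rpow_add hB]
      have hxm : (0:ℝ) < x ^ (2*m) := Real.rpow_pos_of_pos hx _
      have h5 : (0:ℝ) < (m * Ωs * x ^ 2 + ms * Ωm) ^ (m + ms) :=
        Real.rpow_pos_of_pos hS _
      rw [Real.rpow_add hS, hD]
      field_simp [hm.ne', hΩspos.ne', hBeta.ne', hx.ne', hΩmpos.ne',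
        (by linarith : ms ≠ 0), hS.ne']
    rw [setIntegral_congr_fun measurableSet_Ioi hpt] at key
    rw [← key, MeasureTheory.integral_const_mul]
    have hBI := beta_Ioi (m+1) (ms-1) (by linarith) (by linarith)
    have hexp : ∀ t : ℝ, t ^ (m + 1 - 1) * (1+t) ^ (-(m + 1 + (ms - 1)))
        = t ^ m * (1+t) ^ (-(m+ms)) := by
      intro t
      rw [add_sub_cancel_right, show -(m + 1 + (ms - 1)) = -(m+ms) by ring]
    simp only [hexp] at hBI
    rw [hBI, Beta_ratio hm hms, hD]
    have hms1 : (0:ℝ) < ms - 1 := by linarith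
    field_simp
  · rw [hΩm]
    have hms1 : (0:ℝ) < ms - 1 := by linarith
    have h2 : (ms - 1) * Ωs ^ 2 = ms := by
      rw [hΩs]; field_simp
    field_simp
    nlinarith [h2]
end

section
/- Let γ_SR, γ_RU be independent nonnegative random variables with γ_SR having density f_SR, and let C > 0. Define γ_AF = γ_SR·γ_RU/(γ_RU + C). Then the CDF of γ_AF satisfies F_AF(γ) = F_SR(γ) + ∫₀^∞ F_RU(Cγ/x) f_SR(x + γ) dx for every γ > 0. -/
open MeasureTheory ProbabilityTheory Set

/-- CDF of the fixed-gain AF end-to-end SNR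
γ_AF = γ_SR·γ_RU/(γ_RU + C). -/
theorem stmt9 {Ω : Type*} [MeasurableSpace Ω] (P : Measure Ω) [IsProbabilityMeasure P]
    (X Y : Ω → ℝ) (hX : Measurable X) (hY : Measurable Y)
    (hXnn : ∀ ω, 0 ≤ X ω) (hYnn : ∀ ω, 0 ≤ Y ω)
    (hindep : IndepFun X Y P) (C : ℝ) (hC : 0 < C)
    (f : ℝ → ℝ)
    (hpdf : ∀ s : Set ℝ, MeasurableSet s → (P (X ⁻¹' s)).toReal = ∫ x in s, f x) :
    ∀ γ : ℝ, 0 < γ →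
      (P {ω | X ω * Y ω / (Y ω + C) ≤ γ}).toReal =
        (P {ω | X ω ≤ γ}).toReal +
          ∫ x in Ioi (0 : ℝ), (P {ω | Y ω ≤ C * γ / x}).toReal * f (x + γ) := by
  intro γ hγ
  have hCγ : 0 < C * γ := mul_pos hC hγ
  set μ : Measure ℝ := P.map X with hμdef
  set ν : Measure ℝ := P.map Y with hνdef
  have hμprob : IsProbabilityMeasure μ := Measure.isProbabilityMeasure_map hX.aemeasurable
  have hνprob : IsProbabilityMeasure ν := Measure.isProbabilityMeasure_map hY.aemeasurable
  -- f is integrable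
  have hItot : Integrable f := by
    by_contra h
    have h1 := hpdf univ MeasurableSet.univ
    rw [Set.preimage_univ, MeasureTheory.setIntegral_univ, integral_undef h] at h1
    simp at h1
  -- measurable representative g of f
  obtain ⟨g, hgsm, hfg⟩ := hItot.aestronglyMeasurable
  have hgmeas : Measurable g := hgsm.measurable
  have hIg : Integrable g := hItot.congr hfg
  -- g is a.e. nonnegative
  have hgnn : ∀ᵐ x, 0 ≤ g x := by
    set s : Set ℝ := {x | g x < 0} with hsdef
    have hs : MeasurableSet s := measurableSet_lt hgmeas measurable_const
    have h1 : (0:ℝ) ≤ ∫ x in s, g x := by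
      rw [← integral_congr_ae (ae_restrict_of_ae hfg), ← hpdf s hs]
      exact ENNReal.toReal_nonneg
    have h2 : ∫ x in s, -(g x) = 0 := by
      have h3 : ∫ x in s, -(g x) ≤ 0 := by
        rw [integral_neg]
        linarith
      have h4 : (0:ℝ) ≤ ∫ x in s, -(g x) := by
        apply setIntegral_nonneg hs
        intro x hx
        simp only [hsdef, mem_setOf_eq] at hx
        simp [le_of_lt hx]
      linarith
    have hnnneg : (0 : ℝ → ℝ) ≤ᵐ[volume.restrict s] fun x => -(g x) := by
      refine (ae_restrict_iff' hs).mpr ?_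
      filter_upwards with x hx
      simp only [hsdef, mem_setOf_eq] at hx
      simp only [Pi.zero_apply]
      linarith
    have h5 := (setIntegral_eq_zero_iff_of_nonneg_ae hnnneg (hIg.neg.restrict)).mp h2
    have h7 := (ae_restrict_iff' hs).mp h5
    filter_upwards [h7] with x hx
    by_contra hneg
    push_neg at hneg
    have hxs : x ∈ s := hneg
    have := hx hxs
    simp only [Pi.zero_apply] at this
    linarith
  -- μ has density g w.r.t. Lebesgue
  set w : ℝ → ENNReal := fun x => ENNReal.ofReal (g x) with hwdef
  have hwmeas : Measurable w := hgmeas.ennreal_ofReal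
  have hμeq : μ = volume.withDensity w := by
    ext s hs
    rw [withDensity_apply _ hs,
      ← ofReal_integral_eq_lintegral_ofReal (hIg.restrict) (ae_restrict_of_ae hgnn)]
    have : μ s = ENNReal.ofReal ((μ s).toReal) := (ENNReal.ofReal_toReal (measure_ne_top _ _)).symm
    rw [this, hμdef, Measure.map_apply hX hs, hpdf s hs,
      integral_congr_ae (ae_restrict_of_ae hfg)]
  -- decompose the event
  set A : Set Ω := {ω | X ω ≤ γ} with hAdef
  set B : Set Ω := {ω | γ < X ω ∧ (X ω - γ) * Y ω ≤ C * γ} with hBdef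
  have hA : MeasurableSet A := measurableSet_le hX measurable_const
  have hB : MeasurableSet B :=
    (measurableSet_lt measurable_const hX).inter
      (measurableSet_le ((hX.sub measurable_const).mul hY) measurable_const)
  have hE : {ω | X ω * Y ω / (Y ω + C) ≤ γ} = A ∪ B := by
    ext ω
    have hY0 := hYnn ω
    have hden : 0 < Y ω + C := by linarith
    simp only [hAdef, hBdef, mem_setOf_eq, mem_union]
    rw [div_le_iff₀ hden]
    constructor
    · intro h
      by_cases hx : X ω ≤ γ
      · exact Or.inl hx
      · exact Or.inr ⟨lt_of_not_ge hx, by nlinarith⟩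
    · rintro (hx | ⟨hx, h⟩) <;> nlinarith
  have hdisj : Disjoint A B := by
    rw [Set.disjoint_left]
    intro ω hω1 hω2
    exact absurd hω2.1 (not_lt.2 hω1)
  -- compute P B via the product measure
  set T : Set (ℝ × ℝ) := {p : ℝ × ℝ | γ < p.1 ∧ (p.1 - γ) * p.2 ≤ C * γ} with hTdef
  have hT : MeasurableSet T :=
    (measurableSet_lt measurable_const measurable_fst).inter
      (measurableSet_le ((measurable_fst.sub measurable_const).mul measurable_snd)
        measurable_const)
  have hmap : P.map (fun ω => (X ω, Y ω)) = μ.prod ν :=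
    (indepFun_iff_map_prod_eq_prod_map_map hX.aemeasurable hY.aemeasurable).mp hindep
  have hBT : B = (fun ω => (X ω, Y ω)) ⁻¹' T := rfl
  have hPB : P B = (μ.prod ν) T := by
    rw [hBT, ← Measure.map_apply (hX.prodMk hY) hT, hmap]
  -- slices
  have hslice : ∀ x : ℝ, ν (Prod.mk x ⁻¹' T) =
      (Ioi γ).indicator (fun x => ν (Iic (C * γ / (x - γ)))) x := by
    intro x
    by_cases hx : γ < x
    · have hx' : 0 < x - γ := sub_pos.2 hx
      have hxm : x ∈ Ioi γ := hx
      rw [indicator_of_mem hxm]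
      congr 1
      ext y
      simp only [hTdef, mem_preimage, mem_setOf_eq, mem_Iic, hx, true_and]
      rw [le_div_iff₀ hx']
      constructor <;> intro h <;> nlinarith
    · have hxm : x ∉ Ioi γ := hx
      rw [indicator_of_notMem hxm]
      have : Prod.mk x ⁻¹' T = ∅ := by
        ext y
        simp only [hTdef, mem_preimage, mem_setOf_eq, mem_empty_iff_false, iff_false, not_and]
        intro h; exact absurd h hx
      rw [this, measure_empty]
  -- measurability of the slice function
  have hcdf : Measurable fun t : ℝ => ν (Iic t) := by
    have hmono : Monotone fun t : ℝ => ν (Iic t) := fun a b hab =>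
      measure_mono (Iic_subset_Iic.2 hab)
    exact hmono.measurable
  have hdiv : Measurable fun x : ℝ => C * γ / (x - γ) :=
    measurable_const.div (measurable_id.sub measurable_const)
  have hHmeas : Measurable fun x : ℝ => ν (Iic (C * γ / (x - γ))) := hcdf.comp hdiv
  -- shift map
  have hmp : MeasurePreserving (fun x : ℝ => x + γ) volume volume :=
    measurePreserving_add_right volume γ
  have hemb : MeasurableEmbedding (fun x : ℝ => x + γ) :=
    (Homeomorph.addRight γ).measurableEmbedding
  have himg : (fun x : ℝ => x + γ) '' Ioi 0 = Ioi γ := by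
    ext x
    simp only [mem_image, mem_Ioi]
    constructor
    · rintro ⟨y, hy, rfl⟩; linarith
    · intro hx; exact ⟨x - γ, by linarith, by ring⟩
  -- chain of lintegral equalities
  have hPBlint : P B = ∫⁻ x in Ioi (0:ℝ), ν (Iic (C * γ / x)) * w (x + γ) := by
    rw [hPB, Measure.prod_apply hT]
    calc ∫⁻ x, ν (Prod.mk x ⁻¹' T) ∂μ
        = ∫⁻ x, (Ioi γ).indicator (fun x => ν (Iic (C * γ / (x - γ)))) x ∂μ := by
          exact lintegral_congr hslice
      _ = ∫⁻ x in Ioi γ, ν (Iic (C * γ / (x - γ))) ∂μ :=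
          lintegral_indicator measurableSet_Ioi _
      _ = ∫⁻ x, ν (Iic (C * γ / (x - γ))) ∂((volume.restrict (Ioi γ)).withDensity w) := by
          rw [hμeq, restrict_withDensity measurableSet_Ioi]
      _ = ∫⁻ x in Ioi γ, w x * ν (Iic (C * γ / (x - γ))) ∂volume := by
          rw [lintegral_withDensity_eq_lintegral_mul _ hwmeas hHmeas]
          rfl
      _ = ∫⁻ x in Ioi (0:ℝ), w (x + γ) * ν (Iic (C * γ / (x + γ - γ))) ∂volume := by
          rw [← himg, ← hmp.setLIntegral_comp_emb hemb
            (fun x => w x * ν (Iic (C * γ / (x - γ)))) (Ioi 0)]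
      _ = ∫⁻ x in Ioi (0:ℝ), ν (Iic (C * γ / x)) * w (x + γ) := by
          apply lintegral_congr
          intro x
          rw [add_sub_cancel_right, mul_comm]
  -- identify (P B).toReal with the Bochner integral on the RHS
  have hYcdf : ∀ t : ℝ, P {ω | Y ω ≤ t} = ν (Iic t) := fun t =>
    (Measure.map_apply hY measurableSet_Iic).symm
  have hgnn' : ∀ᵐ x : ℝ, 0 ≤ g (x + γ) :=
    hmp.quasiMeasurePreserving.tendsto_ae.eventually hgnn
  have hfg' : ∀ᵐ x : ℝ, f (x + γ) = g (x + γ) :=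
    hmp.quasiMeasurePreserving.tendsto_ae.eventually hfg
  have hPBreal : (P B).toReal =
      ∫ x in Ioi (0:ℝ), (P {ω | Y ω ≤ C * γ / x}).toReal * f (x + γ) := by
    have hstep1 : ∫ x in Ioi (0:ℝ), (P {ω | Y ω ≤ C * γ / x}).toReal * f (x + γ)
        = ∫ x in Ioi (0:ℝ), (ν (Iic (C * γ / x))).toReal * g (x + γ) := by
      apply integral_congr_ae
      filter_upwards [ae_restrict_of_ae hfg'] with x hx
      rw [hYcdf, hx]
    have hmeas2 : AEStronglyMeasurable
        (fun x : ℝ => (ν (Iic (C * γ / x))).toReal * g (x + γ))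
        (volume.restrict (Ioi (0:ℝ))) := by
      apply Measurable.aestronglyMeasurable
      exact ((hcdf.comp (measurable_const.div measurable_id)).ennreal_toReal).mul
        (hgmeas.comp (measurable_id.add_const γ))
    have hnn2 : 0 ≤ᵐ[volume.restrict (Ioi (0:ℝ))]
        fun x : ℝ => (ν (Iic (C * γ / x))).toReal * g (x + γ) := by
      filter_upwards [ae_restrict_of_ae hgnn'] with x hx
      exact mul_nonneg ENNReal.toReal_nonneg hx
    rw [hstep1, integral_eq_lintegral_of_nonneg_ae hnn2 hmeas2, hPBlint]
    congr 1
    apply lintegral_congr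
    intro x
    rw [ENNReal.ofReal_mul ENNReal.toReal_nonneg,
      ENNReal.ofReal_toReal (measure_ne_top _ _)]
  -- conclude
  rw [hE, measure_union hdisj hB, ENNReal.toReal_add (measure_ne_top _ _) (measure_ne_top _ _),
    hPBreal]
end
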